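/- The converse of the following statement is false: 'if a star product of two cubic graphs is PMH then both factors are PMH'. Concretely, letting G₁ and G₂ be two copies of the 3-dimensional hypercube Q₃ (each of which is PMH), there exist vertices u ∈ V(G₁), v ∈ V(G₂) and a star product G₁(u)*G₂(v) which does not have the PMH-property: it admits a perfect matching that cannot be extended to a Hamiltonian cycle. -/

import Mathlib

open SimpleGraph

/-- `H` is the edge set of a Hamiltonian cycle of `G`. -/
def IsHamiltonianCycleSet {V : Type} (G : SimpleGraph V) (H : Set (Sym2 V)) : Prop :=
  ∃ (a : V) (c : G.Walk a a), c.IsCycle ∧ (∀ v : V, v ∈ c.support) ∧ H = {e | e ∈ c.edges}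

/-- `M` is the edge set of a perfect matching of `G`: every vertex is incident
to exactly one edge of `M`. -/
def IsPerfectMatchingSet {V : Type} (G : SimpleGraph V) (M : Set (Sym2 V)) : Prop :=
  M ⊆ G.edgeSet ∧ ∀ v : V, ∃! e, e ∈ M ∧ v ∈ e

/-- `F` is the edge set of a 2-factor of `G` (a 2-regular spanning subgraph):
every vertex is incident to exactly two edges of `F`. -/
def IsTwoFactorSet {V : Type} (G : SimpleGraph V) (F : Set (Sym2 V)) : Prop :=
  F ⊆ G.edgeSet ∧ ∀ v : V, {e ∈ F | v ∈ e}.ncard = 2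

/-- `G` is 2-factor Hamiltonian: every 2-factor of `G` is a Hamiltonian cycle. -/
def Is2FH {V : Type} (G : SimpleGraph V) : Prop :=
  ∀ F, IsTwoFactorSet G F → IsHamiltonianCycleSet G F

/-- `G` has the Perfect-Matching-Hamiltonian property: every perfect matching `M`
can be completed, by a perfect matching `N`, to the edge set of a Hamiltonian cycle. -/
def IsPMH {V : Type} (G : SimpleGraph V) : Prop :=
  ∀ M, IsPerfectMatchingSet G M →
    ∃ N, IsPerfectMatchingSet G N ∧ IsHamiltonianCycleSet G (M ∪ N)

/-- `v` is a `t`-malleable vertex of `G`: `v` has degree `t ≥ 2` and, for every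
perfect matching `M` of `G`, there are Hamiltonian cycles `H 1, …, H (t-1)`, each
extending `M`, which together cover all the edges incident to `v` not in `M`. -/
def IsMalleable {V : Type} (G : SimpleGraph V) (v : V) (t : ℕ) : Prop :=
  2 ≤ t ∧ (G.neighborSet v).ncard = t ∧
    ∀ M, IsPerfectMatchingSet G M →
      ∃ H : Fin (t - 1) → Set (Sym2 V),
        (∀ i, IsHamiltonianCycleSet G (H i) ∧ M ⊆ H i) ∧
        G.incidenceSet v \ M ⊆ ⋃ i, H i

def starAdj {V₁ V₂ : Type} (G₁ : SimpleGraph V₁) (v₁ : V₁) (G₂ : SimpleGraph V₂) (v₂ : V₂)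
    (σ : ↥(G₁.neighborSet v₁) ≃ ↥(G₂.neighborSet v₂)) :
    ({x : V₁ // x ≠ v₁} ⊕ {y : V₂ // y ≠ v₂}) → ({x : V₁ // x ≠ v₁} ⊕ {y : V₂ // y ≠ v₂}) → Prop
  | Sum.inl a, Sum.inl b => G₁.Adj a.1 b.1
  | Sum.inl a, Sum.inr b => ∃ (h₁ : a.1 ∈ G₁.neighborSet v₁) (h₂ : b.1 ∈ G₂.neighborSet v₂),
      σ ⟨a.1, h₁⟩ = ⟨b.1, h₂⟩
  | Sum.inr b, Sum.inl a => ∃ (h₁ : a.1 ∈ G₁.neighborSet v₁) (h₂ : b.1 ∈ G₂.neighborSet v₂),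
      σ ⟨a.1, h₁⟩ = ⟨b.1, h₂⟩
  | Sum.inr a, Sum.inr b => G₂.Adj a.1 b.1

/-- A star product `G₁(v₁)*G₂(v₂)`: delete `v₁` and `v₂` and join the neighbours of
`v₁` to the neighbours of `v₂` by three new edges forming a perfect matching between
them; the matching is encoded by the bijection `σ`. -/
def starProd {V₁ V₂ : Type} (G₁ : SimpleGraph V₁) (v₁ : V₁) (G₂ : SimpleGraph V₂) (v₂ : V₂)
    (σ : ↥(G₁.neighborSet v₁) ≃ ↥(G₂.neighborSet v₂)) :
    SimpleGraph ({x : V₁ // x ≠ v₁} ⊕ {y : V₂ // y ≠ v₂}) where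
  Adj := starAdj G₁ v₁ G₂ v₂ σ
  symm := ⟨by
    rintro (a | a) (b | b) h
    · exact G₁.adj_symm h
    · exact h
    · exact h
    · exact G₂.adj_symm h⟩
  loopless := ⟨by
    rintro (a | a) h
    · exact G₁.irrefl h
    · exact G₂.irrefl h⟩

/-- The 3-dimensional hypercube graph `Q₃`: vertices are the functions
`Fin 3 → Fin 2`, two being adjacent when they differ in exactly one coordinate. -/
def Q3 : SimpleGraph (Fin 3 → Fin 2) where
  Adj x y := ∃! i, x i ≠ y i
  symm := ⟨by rintro x y ⟨i, hi, hu⟩; exact ⟨i, hi.symm, fun j hj => hu j hj.symm⟩⟩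
  loopless := ⟨by rintro x ⟨i, hi, -⟩; exact hi rfl⟩

/-!
A perfect matching extends to a Hamiltonian cycle exactly when it lies inside one. Every edge of
`Q₃` meets one of the four even vertices, so a perfect matching of `Q₃` is fixed by the partners
of these four, and each of the resulting nine matchings lies in one of the six Hamiltonian cycles.

In the star product of two cubes at `0` along the identity, the edges outside the matching `M`
below form a single 14-cycle, so a perfect matching `N` disjoint from `M` is one of its two
alternating halves. Which one is decided by the partner of `l ![0,0,1]`, after which the partners
along the 14-cycle are forced until `M ∪ N` closes up a 4-cycle, so it is not Hamiltonian.
-/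
open Function

section General

variable {V : Type} {G : SimpleGraph V}

def partnerEdges (p : V → V) : Set (Sym2 V) := Set.range fun v => s(v, p v)

theorem mem_partnerEdges_iff {p : V → V} (hp : Involutive p) {v w : V} :
    s(v, w) ∈ partnerEdges p ↔ w = p v := by
  constructor
  · rintro ⟨u, hu⟩
    rcases Sym2.eq_iff.1 hu with ⟨rfl, rfl⟩ | ⟨rfl, rfl⟩
    exacts [rfl, (hp u).symm]
  · rintro rfl
    exact ⟨v, rfl⟩

theorem existsUnique_mem_of_forall_iff {X : Set (Sym2 V)} {v o : V}
    (h : ∀ w, s(v, w) ∈ X ↔ w = o) : ∃! e, e ∈ X ∧ v ∈ e := by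
  refine ⟨s(v, o), ⟨(h o).2 rfl, Sym2.mem_mk_left _ _⟩, ?_⟩
  rintro e ⟨he, hve⟩
  obtain ⟨w, rfl⟩ := Sym2.mem_iff_exists.1 hve
  rw [(h w).1 he]

theorem isPerfectMatchingSet_partnerEdges {p : V → V} (hp : Involutive p)
    (hadj : ∀ v, G.Adj v (p v)) : IsPerfectMatchingSet G (partnerEdges p) := by
  refine ⟨?_, fun v => existsUnique_mem_of_forall_iff fun w => mem_partnerEdges_iff hp⟩
  rintro _ ⟨v, rfl⟩
  exact hadj v

theorem IsPerfectMatchingSet.exists_involutive_eq_partnerEdges {M : Set (Sym2 V)}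
    (hM : IsPerfectMatchingSet G M) :
    ∃ p : V → V, Involutive p ∧ (∀ v, G.Adj v (p v)) ∧ M = partnerEdges p := by
  have hpartner : ∀ v, ∃ w, s(v, w) ∈ M := fun v =>
    let ⟨_, ⟨he, hv⟩, _⟩ := hM.2 v
    let ⟨w, hw⟩ := Sym2.mem_iff_exists.1 hv
    ⟨w, hw ▸ he⟩
  choose p hp using hpartner
  have huniq : ∀ v w, s(v, w) ∈ M → w = p v := fun v w h =>
    Sym2.congr_right.1 ((hM.2 v).unique ⟨h, Sym2.mem_mk_left _ _⟩ ⟨hp v, Sym2.mem_mk_left _ _⟩)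
  have hinv : Involutive p := fun v => (huniq _ _ (Sym2.eq_swap ▸ hp v)).symm
  refine ⟨p, hinv, fun v => hM.1 (hp v), Set.ext fun e => ?_⟩
  induction e with
  | _ v w => exact ⟨fun h => (mem_partnerEdges_iff hinv).2 (huniq v w h),
      fun h => (mem_partnerEdges_iff hinv).1 h ▸ hp v⟩

theorem partnerEdges_subset {p : V → V} (hp : Involutive p) {T : Set V} {H : Set (Sym2 V)}
    (hT : ∀ v, v ∈ T ∨ p v ∈ T) (hH : ∀ v ∈ T, s(v, p v) ∈ H) : partnerEdges p ⊆ H := by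
  rintro _ ⟨v, rfl⟩
  rcases hT v with h | h
  · exact hH v h
  · simpa [Sym2.eq_swap, hp v] using hH _ h

instance [DecidableEq V] {u : V} (c : G.Walk u u) : Decidable c.IsCycle :=
  decidable_of_iff (c.edges.Nodup ∧ c ≠ .nil ∧ c.support.tail.Nodup) (by
    rw [Walk.isCycle_def, Walk.isTrail_def])

variable {H : Set (Sym2 V)}

theorem IsHamiltonianCycleSet.subset_edgeSet (hH : IsHamiltonianCycleSet G H) :
    H ⊆ G.edgeSet := by
  obtain ⟨a, c, -, -, rfl⟩ := hH
  exact fun _ he => c.edges_subset_edgeSet he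

theorem IsHamiltonianCycleSet.exists_ne_forall_mem_iff (hH : IsHamiltonianCycleSet G H) (v : V) :
    ∃ a b, a ≠ b ∧ ∀ w, s(v, w) ∈ H ↔ w = a ∨ w = b := by
  obtain ⟨u, c, hc, hsupp, rfl⟩ := hH
  obtain ⟨a, b, hab, hnbr⟩ :=
    Set.ncard_eq_two.1 (hc.ncard_neighborSet_toSubgraph_eq_two (hsupp v))
  refine ⟨a, b, hab, fun w => ?_⟩
  rw [Set.mem_ofPred_eq, ← Walk.mem_edges_toSubgraph, Subgraph.mem_edgeSet,
    ← Subgraph.mem_neighborSet, hnbr]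
  rfl

theorem IsHamiltonianCycleSet.mem_of_closed (hH : IsHamiltonianCycleSet G H) {S : Set V}
    (hS : ∀ x y, s(x, y) ∈ H → x ∈ S → y ∈ S) {x : V} (hx : x ∈ S) (y : V) : y ∈ S := by
  classical
  obtain ⟨a, c, -, hsupp, rfl⟩ := hH
  by_contra hy
  obtain ⟨d, hd, hd₁, hd₂⟩ := ((c.takeUntil x (hsupp x)).reverse.append
    (c.takeUntil y (hsupp y))).exists_boundary_dart S hx hy
  refine hd₂ (hS _ _ ?_ hd₁)
  have hmem := List.mem_map_of_mem (f := Dart.edge) hd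
  rw [← Walk.edges, Walk.edges_append, Walk.edges_reverse, List.mem_append,
    List.mem_reverse] at hmem
  rcases hmem with h | h <;> exact c.edges_takeUntil_subset_edges _ h

theorem IsHamiltonianCycleSet.isPerfectMatchingSet_sdiff {M : Set (Sym2 V)}
    (hH : IsHamiltonianCycleSet G H) (hM : IsPerfectMatchingSet G M) (hMH : M ⊆ H) :
    IsPerfectMatchingSet G (H \ M) := by
  obtain ⟨p, hp, -, rfl⟩ := hM.exists_involutive_eq_partnerEdges
  refine ⟨Set.sdiff_subset.trans hH.subset_edgeSet, fun v => ?_⟩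
  obtain ⟨a, b, hab, hvH⟩ := hH.exists_ne_forall_mem_iff v
  have hdiff : ∀ w, s(v, w) ∈ H \ partnerEdges p ↔ (w = a ∨ w = b) ∧ w ≠ p v := fun w => by
    rw [Set.mem_sdiff, hvH, mem_partnerEdges_iff hp]
  rcases (hvH _).1 (hMH ⟨v, rfl⟩) with h | h
  · exact existsUnique_mem_of_forall_iff (o := b) fun w => by rw [hdiff]; grind
  · exact existsUnique_mem_of_forall_iff (o := a) fun w => by rw [hdiff]; grind

theorem isPMH_of_forall_exists_subset
    (h : ∀ M, IsPerfectMatchingSet G M → ∃ H, IsHamiltonianCycleSet G H ∧ M ⊆ H) : IsPMH G :=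
  fun M hM =>
    let ⟨H, hH, hMH⟩ := h M hM
    ⟨H \ M, hH.isPerfectMatchingSet_sdiff hM hMH, by rwa [Set.union_sdiff_cancel hMH]⟩

variable {p q : V → V}

theorem IsHamiltonianCycleSet.apply_ne_of_union_partnerEdges (hp : Involutive p)
    (hq : Involutive q) (hH : IsHamiltonianCycleSet G (partnerEdges p ∪ partnerEdges q)) (v : V) :
    p v ≠ q v := by
  intro hpq
  obtain ⟨a, b, hab, hvH⟩ := hH.exists_ne_forall_mem_iff v
  have hpartner : ∀ w, w = a ∨ w = b ↔ w = p v := fun w => by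
    rw [← hvH, Set.mem_union, mem_partnerEdges_iff hp, mem_partnerEdges_iff hq, ← hpq, or_self]
  exact hab (((hpartner a).1 (.inl rfl)).trans ((hpartner b).1 (.inr rfl)).symm)

theorem not_isHamiltonianCycleSet_union_partnerEdges (hp : Involutive p) (hq : Involutive q)
    {S : Set V} (hpS : ∀ x ∈ S, p x ∈ S) (hqS : ∀ x ∈ S, q x ∈ S) {x y : V} (hx : x ∈ S)
    (hy : y ∉ S) : ¬ IsHamiltonianCycleSet G (partnerEdges p ∪ partnerEdges q) := by
  refine fun hH => hy (hH.mem_of_closed (fun u w huw hu => ?_) hx y)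
  rcases huw with h | h
  · exact (mem_partnerEdges_iff hp).1 h ▸ hpS u hu
  · exact (mem_partnerEdges_iff hq).1 h ▸ hqS u hu

theorem Function.Involutive.apply_mem_of_pairs (hq : Involutive q) {a b c d : V}
    (hab : q a = b) (hcd : q c = d) :
    ∀ x ∈ ({a, b, c, d} : Set V), q x ∈ ({a, b, c, d} : Set V) := by
  have hba : q b = a := hab ▸ hq a
  have hdc : q d = c := hcd ▸ hq c
  rintro x (rfl | rfl | rfl | rfl) <;> simp [hab, hba, hcd, hdc]

theorem apply_eq_of_forall_adj {v x y : V}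
    (hnbr : ∀ w, G.Adj v w → w = p v ∨ w = x ∨ w = y) (hadj : G.Adj v (q v)) (hpq : p v ≠ q v)
    (hx : q v ≠ x) : q v = y := by
  rcases hnbr _ hadj with h | h | h
  exacts [absurd h.symm hpq, absurd h hx, h]

end General

-- Kernel-reducible replacements for the generic `Pi` instances, so that `decide` can evaluate
-- statements quantifying over the vertices of `Q₃`.
instance (priority := high) : DecidableEq (Fin 3 → Fin 2) := fun x y =>
  decidable_of_iff (x 0 = y 0 ∧ x 1 = y 1 ∧ x 2 = y 2)
    ⟨fun ⟨h0, h1, h2⟩ => funext fun i => by fin_cases i <;> assumption,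
      fun h => by subst h; exact ⟨rfl, rfl, rfl⟩⟩

instance (priority := high) : Fintype (Fin 3 → Fin 2) :=
  .ofList [![0,0,0], ![0,0,1], ![0,1,0], ![0,1,1], ![1,0,0], ![1,0,1], ![1,1,0], ![1,1,1]]
    fun x => by
      obtain ⟨a, b, c, rfl⟩ : ∃ a b c, x = ![a, b, c] :=
        ⟨x 0, x 1, x 2, funext fun i => by fin_cases i <;> rfl⟩
      revert a b c
      decide

instance : DecidableRel Q3.Adj := fun x y =>
  decidable_of_iff (∃ i, x i ≠ y i ∧ ∀ j, x j ≠ y j → j = i) Iff.rfl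

namespace Q3

def hamCycles : List (Q3.Walk ![0,0,0] ![0,0,0]) :=
  [.ofSupport [![0,0,0], ![0,0,1], ![0,1,1], ![0,1,0], ![1,1,0], ![1,1,1], ![1,0,1], ![1,0,0],
      ![0,0,0]] (List.cons_ne_nil _ _) (by decide),
    .ofSupport [![0,0,0], ![0,0,1], ![0,1,1], ![1,1,1], ![1,0,1], ![1,0,0], ![1,1,0], ![0,1,0],
      ![0,0,0]] (List.cons_ne_nil _ _) (by decide),
    .ofSupport [![0,0,0], ![0,0,1], ![1,0,1], ![1,0,0], ![1,1,0], ![1,1,1], ![0,1,1], ![0,1,0],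
      ![0,0,0]] (List.cons_ne_nil _ _) (by decide),
    .ofSupport [![0,0,0], ![0,0,1], ![1,0,1], ![1,1,1], ![0,1,1], ![0,1,0], ![1,1,0], ![1,0,0],
      ![0,0,0]] (List.cons_ne_nil _ _) (by decide),
    .ofSupport [![0,0,0], ![0,1,0], ![0,1,1], ![0,0,1], ![1,0,1], ![1,1,1], ![1,1,0], ![1,0,0],
      ![0,0,0]] (List.cons_ne_nil _ _) (by decide),
    .ofSupport [![0,0,0], ![0,1,0], ![1,1,0], ![1,1,1], ![0,1,1], ![0,0,1], ![1,0,1], ![1,0,0],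
      ![0,0,0]] (List.cons_ne_nil _ _) (by decide)]

theorem isHamiltonianCycleSet_of_mem_hamCycles :
    ∀ c ∈ hamCycles, IsHamiltonianCycleSet Q3 {e | e ∈ c.edges} := by
  have : ∀ c ∈ hamCycles, c.IsCycle ∧ ∀ v, v ∈ c.support := by decide
  exact fun c hc => ⟨_, c, (this c hc).1, (this c hc).2, rfl⟩

theorem mem_or_mem_of_adj : ∀ x y, Q3.Adj x y →
    x ∈ ({![0,0,0], ![0,1,1], ![1,0,1], ![1,1,0]} : Set _) ∨
      y ∈ ({![0,0,0], ![0,1,1], ![1,0,1], ![1,1,0]} : Set _) := by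
  decide

set_option synthInstance.maxSize 2000 in
theorem exists_hamCycle_of_adj : ∀ a : Fin 3 → Fin 2, Q3.Adj ![0,0,0] a →
    ∀ b : Fin 3 → Fin 2, Q3.Adj ![0,1,1] b → ∀ c : Fin 3 → Fin 2, Q3.Adj ![1,0,1] c →
    ∀ d : Fin 3 → Fin 2, Q3.Adj ![1,1,0] d → [a, b, c, d].Nodup →
    ∃ w ∈ hamCycles, s(![0,0,0], a) ∈ w.edges ∧ s(![0,1,1], b) ∈ w.edges ∧
      s(![1,0,1], c) ∈ w.edges ∧ s(![1,1,0], d) ∈ w.edges := by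
  decide

theorem isPMH : IsPMH Q3 := by
  refine isPMH_of_forall_exists_subset fun M hM => ?_
  obtain ⟨p, hp, hadj, rfl⟩ := hM.exists_involutive_eq_partnerEdges
  have hnodup : ([![0,0,0], ![0,1,1], ![1,0,1], ![1,1,0]] : List (Fin 3 → Fin 2)).Nodup := by
    decide
  obtain ⟨w, hw, h₀, h₁, h₂, h₃⟩ := exists_hamCycle_of_adj _ (hadj _) _ (hadj _) _ (hadj _) _
    (hadj _) (hnodup.map hp.injective)
  refine ⟨_, isHamiltonianCycleSet_of_mem_hamCycles w hw,
    partnerEdges_subset hp (fun v => mem_or_mem_of_adj _ _ (hadj v)) ?_⟩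
  rintro v (rfl | rfl | rfl | rfl)
  exacts [h₀, h₁, h₂, h₃]

end Q3

instance {V₁ V₂ : Type} [DecidableEq V₁] [DecidableEq V₂] {G₁ : SimpleGraph V₁}
    {G₂ : SimpleGraph V₂} [DecidableRel G₁.Adj] [DecidableRel G₂.Adj] {v₁ : V₁} {v₂ : V₂}
    (σ : ↥(G₁.neighborSet v₁) ≃ ↥(G₂.neighborSet v₂)) :
    DecidableRel (starProd G₁ v₁ G₂ v₂ σ).Adj
  | .inl a, .inl b => inferInstanceAs (Decidable (G₁.Adj a b))
  | .inl a, .inr b => inferInstanceAs (Decidable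
      (∃ (h₁ : a.1 ∈ G₁.neighborSet v₁) (h₂ : b.1 ∈ G₂.neighborSet v₂), σ ⟨a.1, h₁⟩ = ⟨b.1, h₂⟩))
  | .inr b, .inl a => inferInstanceAs (Decidable
      (∃ (h₁ : a.1 ∈ G₁.neighborSet v₁) (h₂ : b.1 ∈ G₂.neighborSet v₂), σ ⟨a.1, h₁⟩ = ⟨b.1, h₂⟩))
  | .inr a, .inr b => inferInstanceAs (Decidable (G₂.Adj a b))

namespace Q3StarQ3

abbrev Vertex : Type := {x : Fin 3 → Fin 2 // x ≠ ![0,0,0]} ⊕ {y : Fin 3 → Fin 2 // y ≠ ![0,0,0]}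

abbrev graph : SimpleGraph Vertex := starProd Q3 ![0,0,0] Q3 ![0,0,0] (Equiv.refl _)

abbrev l (x : Fin 3 → Fin 2) (hx : x ≠ ![0,0,0] := by decide) : Vertex := .inl ⟨x, hx⟩

abbrev r (y : Fin 3 → Fin 2) (hy : y ≠ ![0,0,0] := by decide) : Vertex := .inr ⟨y, hy⟩

open Equiv in
def matching : Perm Vertex :=
  swap (l ![0,0,1]) (l ![0,1,1]) * swap (l ![1,0,1]) (l ![1,1,1]) *
    swap (l ![0,1,0]) (l ![1,1,0]) * swap (l ![1,0,0]) (r ![1,0,0]) *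
    swap (r ![0,1,0]) (r ![0,1,1]) * swap (r ![0,0,1]) (r ![1,0,1]) *
    swap (r ![1,1,0]) (r ![1,1,1])

theorem matching_involutive : Involutive matching := show ∀ v, _ from by decide

theorem isPerfectMatchingSet_matching : IsPerfectMatchingSet graph (partnerEdges matching) :=
  isPerfectMatchingSet_partnerEdges matching_involutive (by decide)

theorem not_exists_isHamiltonianCycleSet_union : ¬ ∃ N, IsPerfectMatchingSet graph N ∧
    IsHamiltonianCycleSet graph (partnerEdges matching ∪ N) := by
  rintro ⟨N, hN, hH⟩
  obtain ⟨q, hq, hqadj, rfl⟩ := hN.exists_involutive_eq_partnerEdges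
  have hpq := hH.apply_ne_of_union_partnerEdges matching_involutive hq
  have forced {v : Vertex} (x : Vertex) {y : Vertex}
      (hnbr : ∀ w, graph.Adj v w → w = matching v ∨ w = x ∨ w = y) (hx : q v ≠ x) : q v = y :=
    apply_eq_of_forall_adj hnbr (hqadj v) (hpq v) hx
  by_cases h : q (l ![0,0,1]) = l ![1,0,1]
  · have h₁ : q (l ![1,0,0]) = l ![1,1,0] :=
      forced (l ![1,0,1]) (by decide) ((hq.injective.ne (by decide)).trans_eq h)
    have h₂ : q (l ![1,1,1]) = l ![0,1,1] :=
      forced (l ![1,1,0]) (by decide) ((hq.injective.ne (by decide)).trans_eq h₁)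
    exact not_isHamiltonianCycleSet_union_partnerEdges matching_involutive hq (by decide)
      (hq.apply_mem_of_pairs h h₂) (x := l ![0,0,1]) (by simp) (y := r ![0,0,1]) (by simp) hH
  · have h₁ : q (l ![0,0,1]) = r ![0,0,1] := forced (l ![1,0,1]) (by decide) h
    have h₂ : q (r ![0,1,1]) = r ![1,1,1] :=
      forced (r ![0,0,1]) (by decide) ((hq.injective.ne (by decide)).trans_eq h₁)
    have h₃ : q (r ![1,0,1]) = r ![1,0,0] :=
      forced (r ![1,1,1]) (by decide) ((hq.injective.ne (by decide)).trans_eq h₂)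
    have h₄ : q (r ![1,1,0]) = r ![0,1,0] :=
      forced (r ![1,0,0]) (by decide) ((hq.injective.ne (by decide)).trans_eq h₃)
    exact not_isHamiltonianCycleSet_union_partnerEdges matching_involutive hq (by decide)
      (hq.apply_mem_of_pairs h₂ h₄) (x := r ![0,1,1]) (by simp) (y := l ![0,0,1]) (by simp) hH

end Q3StarQ3

/-- `Q₃` is PMH, yet some star product of two copies of `Q₃` is not PMH: it admits a
perfect matching that cannot be extended to a Hamiltonian cycle. Hence the converse
of "if a star product of two cubic graphs is PMH then both factors are PMH" fails. -/
theorem stmt11 :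
    IsPMH Q3 ∧
    ∃ (u v : Fin 3 → Fin 2) (σ : ↥(Q3.neighborSet u) ≃ ↥(Q3.neighborSet v)),
      ¬ IsPMH (starProd Q3 u Q3 v σ) ∧
      ∃ M, IsPerfectMatchingSet (starProd Q3 u Q3 v σ) M ∧
        ¬ ∃ N, IsPerfectMatchingSet (starProd Q3 u Q3 v σ) N ∧
            IsHamiltonianCycleSet (starProd Q3 u Q3 v σ) (M ∪ N) := by
  refine ⟨Q3.isPMH, ![0,0,0], ![0,0,0], Equiv.refl _, fun h => ?_, _,
    Q3StarQ3.isPerfectMatchingSet_matching, Q3StarQ3.not_exists_isHamiltonianCycleSet_union⟩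
  exact Q3StarQ3.not_exists_isHamiltonianCycleSet_union
    (h _ Q3StarQ3.isPerfectMatchingSet_matching)
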